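/- Let n ≥ 1, let f : {0,1}^n → {0,1} satisfy I[f] ≥ 1, let ε̃ ∈ (0, 1), and let s* ≥ (1/2)·√(2n·log(2n/ε̃)). Let e_{s*}(f) denote the number of influential edges (y, x) of f with n/2 − s* ≤ h(x) and h(y) ≤ n/2 + s*. Then (1 − 2ε̃)·2^{n−1}·I[f] ≤ e_{s*}(f) ≤ 2^{n−1}·I[f]. -/

import Mathlib

/-- Hamming weight of a point of the Boolean lattice `{0,1}^n`. -/
def hw {n : ℕ} (x : Fin n → Bool) : ℕ := (Finset.univ.filter (fun i => x i = true)).card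

/-- `bflip x i` is `x` with its `i`-th coordinate flipped. -/
def bflip {n : ℕ} (x : Fin n → Bool) (i : Fin n) : Fin n → Bool :=
  Function.update x i (!x i)

/-- The individual influence of coordinate `i` on `f`. -/
noncomputable def infl {n : ℕ} (f : (Fin n → Bool) → Bool) (i : Fin n) : ℝ :=
  ((Finset.univ.filter (fun x : Fin n → Bool => f x ≠ f (bflip x i))).card : ℝ) / 2 ^ n

/-- The total influence `I[f] = Σ_i I_i[f]`. -/
noncomputable def totalInfl {n : ℕ} (f : (Fin n → Bool) → Bool) : ℝ := ∑ i, infl f i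

/-
Every influential edge `(y, x)` outside the band `n/2 - s ≤ h(x)`, `h(y) ≤ n/2 + s` has an
endpoint of Hamming weight deviating from `n/2` by more than `s`. By the Chernoff–Hoeffding
bound each tail of the weight distribution has at most `2^n e^{-2s²/n} ≤ ε̃ 2^n / (2n)` points,
and each point lies on at most `n` edges, so at most `ε̃ 2^n = 2ε̃ · 2^{n-1}` of the
`2^{n-1} I[f]` influential edges are lost; since `I[f] ≥ 1` this is at most `2ε̃ · 2^{n-1} I[f]`.
-/

open Finset Real

section HammingWeight

variable {n : ℕ}

lemma sum_exp_mul_hw (t : ℝ) :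
    ∑ y : Fin n → Bool, exp (t * hw y) = (1 + exp t) ^ n := by
  have hprod (y : Fin n → Bool) : exp (t * hw y) = ∏ i, if y i = true then exp t else 1 := by
    rw [prod_ite, prod_const, prod_const, one_pow, mul_one, mul_comm, exp_nat_mul]
    rfl
  simp_rw [hprod]
  rw [← Fintype.prod_sum fun (_ : Fin n) (b : Bool) => if b = true then exp t else 1]
  simp [add_comm]

lemma one_add_exp_le (t : ℝ) : 1 + exp t ≤ 2 * exp (t / 2 + t ^ 2 / 8) := by
  have hcosh := cosh_le_exp_half_sq (t / 2)
  rw [cosh_eq, show (t / 2) ^ 2 / 2 = t ^ 2 / 8 by ring] at hcosh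
  have hsq : exp (t / 2) * exp (t / 2) = exp t := by rw [← exp_add]; ring_nf
  have hinv : exp (t / 2) * exp (-(t / 2)) = 1 := by rw [← exp_add]; simp
  rw [exp_add]
  nlinarith [mul_le_mul_of_nonneg_left hcosh (exp_pos (t / 2)).le]

lemma card_hw_gt_le (hn : 0 < n) {s : ℝ} (hs : 0 ≤ s) :
    (#{y : Fin n → Bool | n / 2 + s < hw y} : ℝ) ≤ 2 ^ n * exp (-(2 * s ^ 2 / n)) := by
  have hn' : (0 : ℝ) < n := by exact_mod_cast hn
  -- the Chernoff parameter minimizing `n (t / 2 + t ^ 2 / 8) - t (n / 2 + s)`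
  set t : ℝ := 4 * s / n
  have ht : 0 ≤ t := by positivity
  have hmarkov : #{y : Fin n → Bool | n / 2 + s < hw y} • exp (t * (n / 2 + s)) ≤
      ∑ y : Fin n → Bool, exp (t * hw y) :=
    (card_nsmul_le_sum _ _ _ fun y hy ↦ exp_le_exp.2 <|
      mul_le_mul_of_nonneg_left (mem_filter.1 hy).2.le ht).trans <|
      sum_le_sum_of_subset_of_nonneg (filter_subset _ _) fun _ _ _ ↦ (exp_pos _).le
  have hmgf : (1 + exp t) ^ n ≤ 2 ^ n * exp (n * (t / 2 + t ^ 2 / 8)) := by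
    rw [exp_nat_mul, ← mul_pow]
    exact pow_le_pow_left₀ (by positivity) (one_add_exp_le t) n
  rw [nsmul_eq_mul, sum_exp_mul_hw, ← le_div_iff₀ (exp_pos _)] at hmarkov
  refine hmarkov.trans ((div_le_div_of_nonneg_right hmgf (exp_pos _).le).trans_eq ?_)
  rw [mul_div_assoc, ← exp_sub]
  congr 2
  simp only [t]
  field_simp
  ring

lemma hw_not_add_hw (x : Fin n → Bool) : hw (fun i => !x i) + hw x = n := by
  simpa [hw, add_comm] using card_filter_add_card_filter_not (s := univ) fun i => x i = true

lemma card_hw_lt_eq_card_hw_gt (s : ℝ) :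
    #{x : Fin n → Bool | hw x < n / 2 - s} = #{y : Fin n → Bool | n / 2 + s < hw y} := by
  have hcast (x : Fin n → Bool) : (hw (fun i => !x i) : ℝ) = n - hw x :=
    eq_sub_of_add_eq (by exact_mod_cast hw_not_add_hw x)
  refine card_nbij' (fun x i => !x i) (fun y i => !y i) ?_ ?_ ?_ ?_ <;>
    intro x hx <;> simp_all only [coe_filter, mem_univ, true_and, Set.mem_ofPred_eq, Bool.not_not]
  · linarith [hcast x]
  · linarith [hcast x]

end HammingWeight

lemma two_mul_mul_exp_neg_le {m ε s : ℝ} (hm : 0 < m) (hε : 0 < ε)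
    (hs : (1 / 2) * √(2 * m * log (2 * m / ε)) ≤ s) :
    2 * m * exp (-(2 * s ^ 2 / m)) ≤ ε := by
  have hlog : log (2 * m / ε) ≤ 2 * s ^ 2 / m := by
    rw [le_div_iff₀ hm]
    nlinarith [(sqrt_le_iff.1 (show √(2 * m * log (2 * m / ε)) ≤ 2 * s by linarith)).2]
  calc 2 * m * exp (-(2 * s ^ 2 / m)) ≤ 2 * m * exp (-log (2 * m / ε)) := by gcongr
    _ = ε := by rw [exp_neg, exp_log (by positivity)]; field_simp

lemma card_filter_fst {α β : Type*} [Fintype α] [Fintype β] (P : α → Prop) [DecidablePred P] :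
    #{p : α × β | P p.1} = #{x | P x} * Fintype.card β := by
  rw [← univ_product_univ, filter_product_left, card_product, card_univ]

section Edges

variable {n : ℕ}

@[simp]
lemma bflip_self (x : Fin n → Bool) (i : Fin n) : bflip x i i = !x i := by
  simp [bflip]

@[simp]
lemma bflip_bflip (x : Fin n → Bool) (i : Fin n) : bflip (bflip x i) i = x := by
  simp [bflip]

def influentialEdges (f : (Fin n → Bool) → Bool) : Finset ((Fin n → Bool) × Fin n) :=
  {p | p.1 p.2 = true ∧ f p.1 ≠ f (bflip p.1 p.2)}

lemma card_sensitive_eq_two_mul (f : (Fin n → Bool) → Bool) (i : Fin n) :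
    #{x | f x ≠ f (bflip x i)} = 2 * #{x | x i = true ∧ f x ≠ f (bflip x i)} := by
  have hflip : #{x | x i = false ∧ f x ≠ f (bflip x i)} =
      #{x | x i = true ∧ f x ≠ f (bflip x i)} := by
    refine card_nbij' (bflip · i) (bflip · i) ?_ ?_ ?_ ?_ <;> intro x hx <;>
      simp_all [Ne.symm]
  rw [← card_filter_add_card_filter_not (fun x => x i = true), filter_filter, filter_filter,
    two_mul]
  simp only [and_comm, Bool.not_eq_true, hflip]

lemma two_mul_card_influentialEdges (f : (Fin n → Bool) → Bool) :
    2 * (#(influentialEdges f) : ℝ) = 2 ^ n * totalInfl f := by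
  have hfiber : #(influentialEdges f) = ∑ i, #{x | x i = true ∧ f x ≠ f (bflip x i)} := by
    simp only [influentialEdges, card_filter, Fintype.sum_prod_type_right]
  have hinfl (i : Fin n) : 2 ^ n * infl f i = #{x | f x ≠ f (bflip x i)} := by
    rw [infl]; field_simp
  simp only [totalInfl, mul_sum, hinfl, card_sensitive_eq_two_mul, hfiber]
  push_cast
  rw [mul_sum]

lemma card_outside_middle_le (s : ℝ) :
    #{p : (Fin n → Bool) × Fin n | ¬ (n / 2 - s ≤ hw (bflip p.1 p.2) ∧ hw p.1 ≤ n / 2 + s)} ≤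
      2 * n * #{y : Fin n → Bool | n / 2 + s < hw y} := by
  have hflip : #{p : (Fin n → Bool) × Fin n | hw (bflip p.1 p.2) < n / 2 - s} =
      #{p : (Fin n → Bool) × Fin n | hw p.1 < n / 2 - s} := by
    refine card_nbij' (fun p => (bflip p.1 p.2, p.2)) (fun p => (bflip p.1 p.2, p.2))
      ?_ ?_ ?_ ?_ <;> intro p hp <;> simp_all
  simp only [not_and_or, not_le, filter_or]
  refine (card_union_le _ _).trans_eq ?_
  rw [hflip, card_filter_fst fun x : Fin n → Bool => (hw x : ℝ) < n / 2 - s,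
    card_filter_fst fun y : Fin n → Bool => n / 2 + s < (hw y : ℝ), Fintype.card_fin,
    card_hw_lt_eq_card_hw_gt]
  ring

lemma card_outside_middle_le_mul_two_pow (hn : 0 < n) {ε s : ℝ} (hε : 0 < ε)
    (hs : (1 / 2) * √(2 * n * log (2 * n / ε)) ≤ s) :
    (#{p : (Fin n → Bool) × Fin n | ¬ (n / 2 - s ≤ hw (bflip p.1 p.2) ∧ hw p.1 ≤ n / 2 + s)} :
      ℝ) ≤ ε * 2 ^ n := by
  have hn' : (0 : ℝ) < n := by exact_mod_cast hn
  calc _ ≤ 2 * n * (#{y : Fin n → Bool | n / 2 + s < hw y} : ℝ) := by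
        exact_mod_cast card_outside_middle_le s
    _ ≤ 2 * n * (2 ^ n * exp (-(2 * s ^ 2 / n))) := by
        gcongr
        exact card_hw_gt_le hn (le_trans (by positivity) hs)
    _ = 2 * n * exp (-(2 * s ^ 2 / n)) * 2 ^ n := by ring
    _ ≤ ε * 2 ^ n := by
        gcongr
        exact two_mul_mul_exp_neg_le hn' hε hs

end Edges

theorem middle_influential_edge_count_general (n : ℕ) (hn : 1 ≤ n)
    (f : (Fin n → Bool) → Bool) (hI : 1 ≤ totalInfl f)
    (εt : ℝ) (hεt0 : 0 < εt)
    (s : ℝ) (hs : (1 / 2) * Real.sqrt (2 * n * Real.log (2 * n / εt)) ≤ s) :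
    (1 - 2 * εt) * 2 ^ (n - 1) * totalInfl f ≤
      ((Finset.univ.filter (fun p : (Fin n → Bool) × Fin n =>
          p.1 p.2 = true ∧ f p.1 ≠ f (bflip p.1 p.2) ∧
          (n : ℝ) / 2 - s ≤ (hw (bflip p.1 p.2) : ℝ) ∧
          (hw p.1 : ℝ) ≤ (n : ℝ) / 2 + s)).card : ℝ) ∧
    ((Finset.univ.filter (fun p : (Fin n → Bool) × Fin n =>
        p.1 p.2 = true ∧ f p.1 ≠ f (bflip p.1 p.2) ∧
        (n : ℝ) / 2 - s ≤ (hw (bflip p.1 p.2) : ℝ) ∧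
        (hw p.1 : ℝ) ≤ (n : ℝ) / 2 + s)).card : ℝ)
      ≤ 2 ^ (n - 1) * totalInfl f := by
  let middle (p : (Fin n → Bool) × Fin n) : Prop :=
    (n : ℝ) / 2 - s ≤ hw (bflip p.1 p.2) ∧ (hw p.1 : ℝ) ≤ n / 2 + s
  have hmiddle : ({p | p.1 p.2 = true ∧ f p.1 ≠ f (bflip p.1 p.2) ∧ middle p} :
      Finset ((Fin n → Bool) × Fin n)) = {p ∈ influentialEdges f | middle p} := by
    rw [influentialEdges, filter_filter]
    simp only [and_assoc]
  simp only [middle] at hmiddle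
  rw [hmiddle]
  have hsplit : (#{p ∈ influentialEdges f | middle p} : ℝ) +
      #{p ∈ influentialEdges f | ¬ middle p} = #(influentialEdges f) := by
    exact_mod_cast card_filter_add_card_filter_not middle
  have hlost : (#{p ∈ influentialEdges f | ¬ middle p} : ℝ) ≤ εt * 2 ^ n :=
    (Nat.cast_le.2 (card_le_card (filter_subset_filter _ (subset_univ _)))).trans
      (card_outside_middle_le_mul_two_pow hn hεt0 hs)
  have hE := two_mul_card_influentialEdges f
  have hpow : (2 : ℝ) ^ n = 2 * 2 ^ (n - 1) := by rw [← pow_succ', Nat.sub_add_cancel hn]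
  rw [hpow] at hE hlost
  have hεI : εt * 2 ^ (n - 1) ≤ εt * 2 ^ (n - 1) * totalInfl f :=
    le_mul_of_one_le_right (by positivity) hI
  constructor <;> linarith

/-- For `f` with `I[f] ≥ 1`, `ε̃ ∈ (0,1)` and `s* ≥ (1/2)√(2n·log(2n/ε̃))`, the number
`e_{s*}(f)` of influential edges `(y, x)` of `f` with `n/2 − s* ≤ h(x)` and
`h(y) ≤ n/2 + s*` satisfies `(1 − 2ε̃)·2^{n−1}·I[f] ≤ e_{s*}(f) ≤ 2^{n−1}·I[f]`. -/
theorem middle_influential_edge_count (n : ℕ) (hn : 1 ≤ n)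
    (f : (Fin n → Bool) → Bool) (hI : 1 ≤ totalInfl f)
    (εt : ℝ) (hεt0 : 0 < εt) (hεt1 : εt < 1)
    (s : ℝ) (hs : (1 / 2) * Real.sqrt (2 * n * Real.log (2 * n / εt)) ≤ s) :
    (1 - 2 * εt) * 2 ^ (n - 1) * totalInfl f ≤
      ((Finset.univ.filter (fun p : (Fin n → Bool) × Fin n =>
          p.1 p.2 = true ∧ f p.1 ≠ f (bflip p.1 p.2) ∧
          (n : ℝ) / 2 - s ≤ (hw (bflip p.1 p.2) : ℝ) ∧
          (hw p.1 : ℝ) ≤ (n : ℝ) / 2 + s)).card : ℝ) ∧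
    ((Finset.univ.filter (fun p : (Fin n → Bool) × Fin n =>
        p.1 p.2 = true ∧ f p.1 ≠ f (bflip p.1 p.2) ∧
        (n : ℝ) / 2 - s ≤ (hw (bflip p.1 p.2) : ℝ) ∧
        (hw p.1 : ℝ) ≤ (n : ℝ) / 2 + s)).card : ℝ)
      ≤ 2 ^ (n - 1) * totalInfl f :=
  middle_influential_edge_count_general n hn f hI εt hεt0 s hs
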